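/- Let G be a finite group, Γ ⊆ G a union of conjugacy classes, u_Γ the tuple listing each element g of Γ repeated ord(g) times, and u a tuple with entries in Γ. If w is a tuple generating G with Nielsen type ν(w) ≥ ν(u_Γ·u) (componentwise on conjugacy classes), then there exists a tuple v generating G such that w is braid equivalent to v·u. -/

import Mathlib

open scoped Classical

/-- An elementary Hurwitz move on tuples of elements of `G`:
`(…, a, b, …) ↦ (…, b, b⁻¹ a b, …)`. -/
def HurwitzMove {G : Type*} [Group G] (v w : List G) : Prop :=
  ∃ (x y : List G) (a b : G), v = x ++ a :: b :: y ∧ w = x ++ b :: (b⁻¹ * a * b) :: y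

/-- Braid equivalence: same orbit under the Hurwitz action of the braid group. -/
def BraidEquiv {G : Type*} [Group G] (v w : List G) : Prop :=
  Relation.EqvGen HurwitzMove v w

/-- The Nielsen type: the number of entries of `v` in the conjugacy class of `g`. -/
noncomputable def nielsen {G : Type*} [Group G] (v : List G) (g : G) : ℕ :=
  v.countP (fun x => decide (IsConj g x))

/-- `u_Γ`: the tuple listing each element `g` of `Γ` repeated `ord g` times. -/
noncomputable def uGamma {G : Type*} [Group G] [DecidableEq G] (Γ : Finset G) : List G :=
  Γ.toList.flatMap (fun g => List.replicate (orderOf g) g)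

/-!
Induct on `u` from the right. If `a` is its last entry and `n = ord a`, then `ν(u_Γ)` takes the
value `n · #(Γ ∩ a^G)` at `a`, so `w` has more than that many entries conjugate to `a` and, by
pigeonhole, some conjugate `c` of `a` occurs more than `n` times in `w`. Hurwitz moves collect
these copies at the end, `w ≈ l · cⁿ` with `c ∈ l`, so `l` still generates `G`. Because `cⁿ = 1`,
the block `cⁿ` commutes with any tuple up to braid equivalence, and moving an entry `x` of `l`
across it conjugates it by `x`. As `l` generates `G`, the block can be conjugated to
`aⁿ = aⁿ⁻¹ · a`, and the induction continues with `l · aⁿ⁻¹`.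
-/

open List

section

variable {G : Type*} [Group G]

namespace BraidEquiv

variable {v w : List G}

theorem refl (v : List G) : BraidEquiv v v := Relation.EqvGen.refl v

theorem symm (h : BraidEquiv v w) : BraidEquiv w v := Relation.EqvGen.symm _ _ h

theorem trans {u : List G} (h₁ : BraidEquiv u v) (h₂ : BraidEquiv v w) : BraidEquiv u w :=
  Relation.EqvGen.trans _ _ _ h₁ h₂

theorem of_hurwitzMove (h : HurwitzMove v w) : BraidEquiv v w := Relation.EqvGen.rel _ _ h

theorem map {f : List G → List G} (hf : ∀ {v w}, HurwitzMove v w → HurwitzMove (f v) (f w))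
    (h : BraidEquiv v w) : BraidEquiv (f v) (f w) := by
  induction h with
  | rel _ _ h => exact of_hurwitzMove (hf h)
  | refl => exact refl _
  | symm _ _ _ ih => exact ih.symm
  | trans _ _ _ _ _ ih₁ ih₂ => exact ih₁.trans ih₂

theorem eq_of_hurwitzMove_invariant {α : Type*} {f : List G → α}
    (hf : ∀ {v w}, HurwitzMove v w → f v = f w) (h : BraidEquiv v w) : f v = f w := by
  induction h with
  | rel _ _ h => exact hf h
  | refl => rfl
  | symm _ _ _ ih => exact ih.symm
  | trans _ _ _ _ _ ih₁ ih₂ => exact ih₁.trans ih₂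

theorem append_left (l : List G) (h : BraidEquiv v w) : BraidEquiv (l ++ v) (l ++ w) :=
  h.map (f := (l ++ ·)) fun ⟨s, t, a, b, hv, hw⟩ => ⟨l ++ s, t, a, b, by simp [hv], by simp [hw]⟩

theorem append_right (h : BraidEquiv v w) (t : List G) : BraidEquiv (v ++ t) (w ++ t) :=
  h.map (f := (· ++ t)) fun ⟨s, r, a, b, hv, hw⟩ => ⟨s, r ++ t, a, b, by simp [hv], by simp [hw]⟩

theorem cons (x : G) (h : BraidEquiv v w) : BraidEquiv (x :: v) (x :: w) :=
  h.append_left [x]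

end BraidEquiv

theorem HurwitzMove.nielsen_eq {v w : List G} (h : HurwitzMove v w) : nielsen v = nielsen w := by
  obtain ⟨s, t, a, b, rfl, rfl⟩ := h
  ext g
  have hconj : IsConj g (b⁻¹ * a * b) ↔ IsConj g a :=
    ⟨fun h => h.trans (isConj_iff.mpr ⟨b, by group⟩),
      fun h => h.trans (isConj_iff.mpr ⟨b⁻¹, by group⟩)⟩
  simp only [nielsen, countP_append, countP_cons, hconj]
  omega

theorem HurwitzMove.closure_eq {v w : List G} (h : HurwitzMove v w) :
    Subgroup.closure {x | x ∈ v} = Subgroup.closure {x | x ∈ w} := by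
  obtain ⟨s, t, a, b, rfl, rfl⟩ := h
  apply le_antisymm <;> rw [Subgroup.closure_le] <;> intro z hz <;>
    simp only [Set.mem_ofPred_eq, mem_append, List.mem_cons] at hz
  · have hb : b ∈ Subgroup.closure {x | x ∈ s ++ b :: (b⁻¹ * a * b) :: t} :=
      Subgroup.subset_closure (by simp)
    have hab : b⁻¹ * a * b ∈ Subgroup.closure {x | x ∈ s ++ b :: (b⁻¹ * a * b) :: t} :=
      Subgroup.subset_closure (by simp)
    obtain hz | rfl | rfl | hz := hz
    · exact Subgroup.subset_closure (by simp [hz])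
    · simpa [mul_assoc] using mul_mem (mul_mem hb hab) (inv_mem hb)
    · exact hb
    · exact Subgroup.subset_closure (by simp [hz])
  · have ha : a ∈ Subgroup.closure {x | x ∈ s ++ a :: b :: t} := Subgroup.subset_closure (by simp)
    have hb : b ∈ Subgroup.closure {x | x ∈ s ++ a :: b :: t} := Subgroup.subset_closure (by simp)
    obtain hz | rfl | rfl | hz := hz
    · exact Subgroup.subset_closure (by simp [hz])
    · exact hb
    · exact mul_mem (mul_mem (inv_mem hb) ha) hb
    · exact Subgroup.subset_closure (by simp [hz])

theorem BraidEquiv.nielsen_eq {v w : List G} (h : BraidEquiv v w) : nielsen v = nielsen w :=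
  h.eq_of_hurwitzMove_invariant HurwitzMove.nielsen_eq

theorem BraidEquiv.closure_eq {v w : List G} (h : BraidEquiv v w) :
    Subgroup.closure {x | x ∈ v} = Subgroup.closure {x | x ∈ w} :=
  h.eq_of_hurwitzMove_invariant HurwitzMove.closure_eq

theorem braidEquiv_cons_map_conj (x : G) :
    ∀ t : List G, BraidEquiv (x :: t) (t.map (fun z => x * z * x⁻¹) ++ [x])
  | [] => .refl _
  | z :: t => by
    have hmove : BraidEquiv (x :: z :: t) ((x * z * x⁻¹) :: x :: t) :=
      (BraidEquiv.of_hurwitzMove ⟨[], t, x * z * x⁻¹, x, rfl, by simp [mul_assoc]⟩).symm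
    simpa using hmove.trans ((braidEquiv_cons_map_conj x t).cons _)

theorem braidEquiv_replicate_append (c : G) (t : List G) :
    ∀ m : ℕ, BraidEquiv (replicate m c ++ t)
      (t.map (fun z => c ^ m * z * (c ^ m)⁻¹) ++ replicate m c)
  | 0 => by simpa using .refl t
  | m + 1 => by
    have h := ((braidEquiv_replicate_append c t m).cons c).trans (braidEquiv_cons_map_conj c _)
    convert h using 1
    · simp [replicate_succ]
    · simp [replicate_succ', pow_succ', mul_assoc]

theorem braidEquiv_replicate_append_comm {c : G} {n : ℕ} (hc : c ^ n = 1) (t : List G) :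
    BraidEquiv (replicate n c ++ t) (t ++ replicate n c) := by
  simpa [hc] using braidEquiv_replicate_append c t n

theorem conj_pow_eq_one {c : G} {n : ℕ} (hc : c ^ n = 1) (g : G) : (g * c * g⁻¹) ^ n = 1 := by
  simp [conj_pow, hc]

theorem IsConj.orderOf_eq {a c : G} (h : IsConj a c) : orderOf a = orderOf c := by
  obtain ⟨g, rfl⟩ := isConj_iff.mp h
  simpa using ((MulAut.conj g).orderOf_eq a).symm

theorem exists_braidEquiv_append_replicate_count (c : G) (w : List G) :
    ∃ w₀, BraidEquiv w (w₀ ++ replicate (w.count c) c) := by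
  induction w using List.reverseRecOn with
  | nil => exact ⟨[], by simpa using .refl []⟩
  | append_singleton w z ih =>
    obtain ⟨w₀, hw₀⟩ := ih
    by_cases hz : z = c
    · subst hz
      refine ⟨w₀, ?_⟩
      simpa [replicate_succ'] using hw₀.append_right [z]
    · refine ⟨w₀ ++ [c ^ w.count c * z * (c ^ w.count c)⁻¹], ?_⟩
      have h₁ := hw₀.append_right [z]
      rw [append_assoc] at h₁
      simpa [hz] using
        h₁.trans ((braidEquiv_replicate_append c [z] (w.count c)).append_left w₀)

theorem braidEquiv_cons_replicate_conj {c : G} {n : ℕ} (hc : c ^ n = 1) (x : G) :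
    BraidEquiv (x :: replicate n c) (x :: replicate n (x * c * x⁻¹)) := by
  have h := braidEquiv_cons_map_conj x (replicate n c)
  rw [map_replicate] at h
  simpa using h.trans (braidEquiv_replicate_append_comm (conj_pow_eq_one hc x) [x])

theorem braidEquiv_append_replicate_conj_of_mem {c : G} {n : ℕ} (hc : c ^ n = 1) {l : List G}
    {x : G} (hx : x ∈ l) :
    BraidEquiv (l ++ replicate n c) (l ++ replicate n (x * c * x⁻¹)) := by
  obtain ⟨l₁, l₂, rfl⟩ := List.append_of_mem hx
  have h₁ := ((braidEquiv_replicate_append_comm hc l₂).symm.cons x).append_left l₁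
  have h₂ := ((braidEquiv_cons_replicate_conj hc x).append_right l₂).append_left l₁
  have h₃ := ((braidEquiv_replicate_append_comm (conj_pow_eq_one hc x) l₂).cons x).append_left l₁
  simpa using h₁.trans (h₂.trans h₃)

theorem braidEquiv_append_replicate_conj {n : ℕ} {l : List G} {g : G}
    (hg : g ∈ Subgroup.closure {x | x ∈ l}) {c : G} (hc : c ^ n = 1) :
    BraidEquiv (l ++ replicate n c) (l ++ replicate n (g * c * g⁻¹)) := by
  induction hg using Subgroup.closure_induction generalizing c with
  | mem x hx => exact braidEquiv_append_replicate_conj_of_mem hc hx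
  | one => simpa using .refl _
  | mul x y _ _ ihx ihy =>
    simpa [mul_assoc] using (ihy hc).trans (ihx (conj_pow_eq_one hc y))
  | inv x _ ihx =>
    simpa [mul_assoc] using (ihx (c := x⁻¹ * c * x) (by simpa using conj_pow_eq_one hc x⁻¹)).symm

theorem nielsen_append (v w : List G) (g : G) : nielsen (v ++ w) g = nielsen v g + nielsen w g :=
  countP_append

theorem nielsen_singleton_self (a : G) : nielsen [a] a = 1 := by
  simp only [nielsen, countP_singleton, IsConj.refl, decide_true, if_true]

theorem nielsen_flatMap_replicate_orderOf (s : List G) (a : G) :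
    nielsen (s.flatMap fun g => replicate (orderOf g) g) a = orderOf a * nielsen s a := by
  induction s with
  | nil => simp [nielsen]
  | cons g s ih =>
    rw [flatMap_cons, nielsen_append, ih, ← singleton_append, nielsen_append (v := [g])]
    by_cases hag : IsConj a g
    · simp only [nielsen, countP_replicate, countP_singleton, hag, decide_true, if_true,
        hag.orderOf_eq]
      ring
    · simp only [nielsen, countP_replicate, countP_singleton, hag, decide_false,
        Bool.false_eq_true, if_false]
      ring

theorem exists_isConj_lt_count_of_lt_nielsen {a : G} {s : List G}
    (hs : ∀ x, IsConj a x → x ∈ s) {n : ℕ} {w : List G} (h : n * nielsen s a < nielsen w a) :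
    ∃ c, IsConj a c ∧ n < w.count c := by
  by_contra! hle
  have : nielsen w a ≤ n * nielsen s a :=
    calc nielsen w a = ∑ x ∈ w.toFinset with IsConj a x, w.count x :=
          (Finset.sum_filter_count_eq_countP _ w).symm
      _ ≤ ∑ x ∈ w.toFinset with IsConj a x, n * s.count x :=
          Finset.sum_le_sum fun x hx => (hle x (Finset.mem_filter.mp hx).2).trans
            (Nat.le_mul_of_pos_right n (count_pos_iff.mpr (hs x (Finset.mem_filter.mp hx).2)))
      _ ≤ ∑ x ∈ s.toFinset with IsConj a x, n * s.count x :=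
          Finset.sum_le_sum_of_subset fun x hx => by
            simp only [Finset.mem_filter, mem_toFinset] at hx ⊢
            exact ⟨hs x hx.2, hx.2⟩
      _ = n * nielsen s a := by rw [← Finset.mul_sum, Finset.sum_filter_count_eq_countP]; rfl
  omega

theorem exists_generating_braidEquiv_append_singleton {a : G} (ha : 0 < orderOf a)
    {s : List G} (hs : ∀ x, IsConj a x → x ∈ s) {w : List G}
    (hw : Subgroup.closure {x | x ∈ w} = ⊤) (h : orderOf a * nielsen s a < nielsen w a) :
    ∃ v, Subgroup.closure {x | x ∈ v} = ⊤ ∧ BraidEquiv w (v ++ [a]) := by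
  obtain ⟨c, hac, hcount⟩ := exists_isConj_lt_count_of_lt_nielsen hs h
  obtain ⟨w₀, hw₀⟩ := exists_braidEquiv_append_replicate_count c w
  set l := w₀ ++ replicate (w.count c - orderOf a) c
  have hwl : BraidEquiv w (l ++ replicate (orderOf a) c) := by
    rwa [append_assoc, ← replicate_add, Nat.sub_add_cancel hcount.le]
  have hl : Subgroup.closure {x | x ∈ l} = ⊤ := by
    have hcl : c ∈ l := mem_append_right _ (mem_replicate.mpr ⟨by omega, rfl⟩)
    rw [← hw, hwl.closure_eq]
    congr 1
    ext x
    simp only [Set.mem_ofPred_eq, mem_append, mem_replicate]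
    exact ⟨Or.inl, fun hx => hx.elim id fun hx => hx.2 ▸ hcl⟩
  obtain ⟨g, rfl⟩ := isConj_iff.mp hac.symm
  have hla := braidEquiv_append_replicate_conj (hl ▸ Subgroup.mem_top g)
    (hac.orderOf_eq ▸ pow_orderOf_eq_one c)
  refine ⟨l ++ replicate (orderOf (g * c * g⁻¹) - 1) (g * c * g⁻¹), ?_, ?_⟩
  · exact top_le_iff.mp (hl ▸ Subgroup.closure_mono fun x hx => mem_append_left _ hx)
  · rw [append_assoc, ← replicate_succ', Nat.sub_add_cancel ha]
    exact hwl.trans hla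

end

/-- If `w` generates `G`, `u` has entries in the union of conjugacy classes `Γ`, and
`ν(w) ≥ ν(u_Γ · u)` componentwise, then `w ≈ v·u` for some tuple `v` generating `G`. -/
theorem exists_generating_prefix {G : Type*} [Group G] [Fintype G] [DecidableEq G]
    (Γ : Finset G) (hΓ : ∀ a ∈ Γ, ∀ g : G, g⁻¹ * a * g ∈ Γ)
    (u : List G) (hu : ∀ x ∈ u, x ∈ Γ)
    (w : List G) (hw : Subgroup.closure {x : G | x ∈ w} = ⊤)
    (hν : ∀ g : G, nielsen (uGamma Γ ++ u) g ≤ nielsen w g) :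
    ∃ v : List G, Subgroup.closure {x : G | x ∈ v} = ⊤ ∧ BraidEquiv w (v ++ u) := by
  induction u using List.reverseRecOn generalizing w with
  | nil => exact ⟨w, hw, by simpa using .refl w⟩
  | append_singleton u a ih =>
    have ha : a ∈ Γ := hu a (by simp)
    have hS : ∀ x, IsConj a x → x ∈ Γ.toList := fun x hax => by
      obtain ⟨g, rfl⟩ := isConj_iff.mp hax
      simpa using hΓ a ha g⁻¹
    have hlt : orderOf a * nielsen Γ.toList a < nielsen w a := by
      have := hν a
      rw [nielsen_append, nielsen_append, uGamma, nielsen_flatMap_replicate_orderOf,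
        nielsen_singleton_self] at this
      omega
    obtain ⟨v', hv', hwv'⟩ :=
      exists_generating_braidEquiv_append_singleton (orderOf_pos a) hS hw hlt
    obtain ⟨v, hv, hv'v⟩ := ih (fun x hx => hu x (by simp [hx])) v' hv' fun g => by
      have h₁ := hν g
      have h₂ := congrFun hwv'.nielsen_eq g
      simp only [nielsen_append] at h₁ h₂ ⊢
      omega
    exact ⟨v, hv, by simpa using hwv'.trans (hv'v.append_right [a])⟩
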